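/- Kinetic energy variation identity: if C_0, C_1, C_2, C_3 and E are C¹ functions on [0,∞) × ℝ, L-periodic in x, satisfying ∂_t C_0 + v_th ∂_x C_1 = 0 and ∂_t C_2 + v_th (√3 ∂_x C_3 + √2 ∂_x C_1) − (√2 / v_th) E C_1 = 0, then for all t ≥ 0: (v_th³/2) · d/dt ∫_0^L ( √2 · C_2(t,x) + C_0(t,x) ) dx = v_th² ∫_0^L E(t,x) C_1(t,x) dx. -/

import Mathlib

open MeasureTheory intervalIntegral

/-! Each mode equation is a balance law `∂ₜρ + ∂ₓJ = S` with an `L`-periodic flux `J`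
(`J = v_th C₁` for `ρ = C₀`, `J = v_th (√3 C₃ + √2 C₁)` for `ρ = C₂`), and integrating it over a
period kills `∂ₓJ`. Hence `d/dt ∫ C₀ = 0` and `d/dt ∫ C₂ = (√2 / v_th) ∫ E C₁`, so that
`d/dt ∫ (√2 C₂ + C₀) = (2 / v_th) ∫ E C₁`. -/

theorem continuous_snd_slice {X : Type*} [TopologicalSpace X] {f : ℝ → ℝ → X}
    (hf : Continuous fun p : ℝ × ℝ => f p.1 p.2) (t : ℝ) : Continuous fun x => f t x :=
  hf.comp (continuous_const.prodMk continuous_id)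

section Slices

variable {E : Type*} [NormedAddCommGroup E] [NormedSpace ℝ E] {f : ℝ → ℝ → E}

theorem hasDerivAt_fst_slice {t x : ℝ}
    (hf : DifferentiableAt ℝ (fun p : ℝ × ℝ => f p.1 p.2) (t, x)) :
    HasDerivAt (fun s => f s x) (fderiv ℝ (fun p : ℝ × ℝ => f p.1 p.2) (t, x) (1, 0)) t :=
  hf.hasFDerivAt.comp_hasDerivAt (f := fun s => (s, x)) t
    ((hasDerivAt_id t).prodMk (hasDerivAt_const t x))

theorem hasDerivAt_snd_slice {t x : ℝ}
    (hf : DifferentiableAt ℝ (fun p : ℝ × ℝ => f p.1 p.2) (t, x)) :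
    HasDerivAt (fun y => f t y) (fderiv ℝ (fun p : ℝ × ℝ => f p.1 p.2) (t, x) (0, 1)) x :=
  hf.hasFDerivAt.comp_hasDerivAt (f := fun y => (t, y)) x
    ((hasDerivAt_const x t).prodMk (hasDerivAt_id x))

theorem hasDerivAt_deriv_snd_slice (hf : ContDiff ℝ 1 fun p : ℝ × ℝ => f p.1 p.2) (t x : ℝ) :
    HasDerivAt (fun y => f t y) (deriv (fun y => f t y) x) x :=
  (hasDerivAt_snd_slice (hf.differentiable one_ne_zero _)).differentiableAt.hasDerivAt

theorem continuous_deriv_snd_slice (hf : ContDiff ℝ 1 fun p : ℝ × ℝ => f p.1 p.2) (t : ℝ) :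
    Continuous fun x => deriv (fun y => f t y) x := by
  have hderiv : (fun x => deriv (fun y => f t y) x)
      = fun x => fderiv ℝ (fun p : ℝ × ℝ => f p.1 p.2) (t, x) (0, 1) :=
    funext fun x => (hasDerivAt_snd_slice (hf.differentiable one_ne_zero _)).deriv
  rw [hderiv]
  exact ((hf.continuous_fderiv one_ne_zero).comp
    (continuous_const.prodMk continuous_id)).clm_apply continuous_const

theorem hasDerivAt_intervalIntegral_of_contDiff (hf : ContDiff ℝ 1 fun p : ℝ × ℝ => f p.1 p.2)
    (a b t : ℝ) :
    HasDerivAt (fun s => ∫ x in a..b, f s x) (∫ x in a..b, deriv (fun s => f s x) t) t := by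
  set f' : ℝ → ℝ → E := fun s x => fderiv ℝ (fun p : ℝ × ℝ => f p.1 p.2) (s, x) (1, 0)
  have hf' : ∀ s x, HasDerivAt (fun s => f s x) (f' s x) s :=
    fun s x => hasDerivAt_fst_slice (hf.differentiable one_ne_zero _)
  have hf'_cont : Continuous fun p : ℝ × ℝ => f' p.1 p.2 :=
    ((hf.continuous_fderiv one_ne_zero).comp (by fun_prop)).clm_apply continuous_const
  obtain ⟨M, hM⟩ := ((isCompact_closedBall t 1).prod isCompact_uIcc).exists_bound_of_continuousOn
    hf'_cont.continuousOn
  have hleibniz := hasDerivAt_integral_of_dominated_loc_of_deriv_le (μ := volume) (a := a) (b := b)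
    (F' := f') (bound := fun _ => M) (Metric.ball_mem_nhds t one_pos)
    (.of_forall fun s => (continuous_snd_slice hf.continuous s).aestronglyMeasurable)
    ((continuous_snd_slice hf.continuous t).intervalIntegrable a b)
    (continuous_snd_slice hf'_cont t).aestronglyMeasurable
    (.of_forall fun x hx s hs =>
      hM (s, x) ⟨Metric.ball_subset_closedBall hs, Set.uIoc_subset_uIcc hx⟩)
    intervalIntegrable_const (.of_forall fun x _ s _ => hf' s x)
  simpa only [fun x => (hf' t x).deriv] using hleibniz.2

end Slices

theorem hasDerivAt_intervalIntegral_const_mul_add {f g : ℝ → ℝ → ℝ}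
    (hf : ContDiff ℝ 1 fun p : ℝ × ℝ => f p.1 p.2) (hg : ContDiff ℝ 1 fun p : ℝ × ℝ => g p.1 p.2)
    (c a b t : ℝ) :
    HasDerivAt (fun s => ∫ x in a..b, (c * f s x + g s x))
      (c * (∫ x in a..b, deriv (fun s => f s x) t) + ∫ x in a..b, deriv (fun s => g s x) t) t := by
  have hsplit : (fun s => ∫ x in a..b, (c * f s x + g s x))
      = fun s => c * (∫ x in a..b, f s x) + ∫ x in a..b, g s x := by
    funext s
    rw [intervalIntegral.integral_add
      (((continuous_snd_slice hf.continuous s).intervalIntegrable a b).const_mul c)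
      ((continuous_snd_slice hg.continuous s).intervalIntegrable a b),
      intervalIntegral.integral_const_mul]
  rw [hsplit]
  exact ((hasDerivAt_intervalIntegral_of_contDiff hf a b t).const_mul c).add
    (hasDerivAt_intervalIntegral_of_contDiff hg a b t)

theorem Function.Periodic.intervalIntegral_eq_of_add_hasDerivAt {E : Type*}
    [NormedAddCommGroup E] [NormedSpace ℝ E] [CompleteSpace E] {r S J J' : ℝ → E} {L : ℝ}
    (hJ : Function.Periodic J L) (hJJ' : ∀ x, HasDerivAt J (J' x) x) (hJ' : Continuous J')
    (hS : IntervalIntegrable S volume 0 L) (hbal : ∀ x, r x + J' x = S x) :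
    ∫ x in (0:ℝ)..L, r x = ∫ x in (0:ℝ)..L, S x := by
  have hflux : ∫ x in (0:ℝ)..L, J' x = 0 := by
    rw [integral_eq_sub_of_hasDerivAt (fun x _ => hJJ' x) (hJ'.intervalIntegrable 0 L),
      sub_eq_zero]
    simpa using hJ 0
  rw [intervalIntegral.integral_congr fun x _ => eq_sub_of_add_eq (hbal x),
    intervalIntegral.integral_sub hS (hJ'.intervalIntegrable 0 L), hflux, sub_zero]

theorem kinetic_energy_variation
    (L vth : ℝ) (hvth : 0 < vth)
    (C0 C1 C2 C3 E : ℝ → ℝ → ℝ)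
    -- regularity: all functions are C¹ in (t,x)
    (hC0 : ContDiff ℝ 1 (fun p : ℝ × ℝ => C0 p.1 p.2))
    (hC1 : ContDiff ℝ 1 (fun p : ℝ × ℝ => C1 p.1 p.2))
    (hC2 : ContDiff ℝ 1 (fun p : ℝ × ℝ => C2 p.1 p.2))
    (hC3 : ContDiff ℝ 1 (fun p : ℝ × ℝ => C3 p.1 p.2))
    (hE : ContDiff ℝ 1 (fun p : ℝ × ℝ => E p.1 p.2))
    -- L-periodicity in space
    (hC1per : ∀ t, Function.Periodic (fun x => C1 t x) L)
    (hC3per : ∀ t, Function.Periodic (fun x => C3 t x) L)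
    -- the mode equations for `C_0` and `C_2`
    (heq0 : ∀ t x,
      deriv (fun s => C0 s x) t + vth * deriv (fun y => C1 t y) x = 0)
    (heq2 : ∀ t x,
      deriv (fun s => C2 s x) t
        + vth * (Real.sqrt 3 * deriv (fun y => C3 t y) x
            + Real.sqrt 2 * deriv (fun y => C1 t y) x)
        - (Real.sqrt 2 / vth) * E t x * C1 t x = 0) :
    ∀ t, 0 ≤ t →
      (vth ^ 3 / 2) *
          deriv (fun s => ∫ x in (0:ℝ)..L, (Real.sqrt 2 * C2 s x + C0 s x)) t
        = vth ^ 2 * ∫ x in (0:ℝ)..L, E t x * C1 t x := by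
  intro t _
  have hC1x := hasDerivAt_deriv_snd_slice hC1 t
  have hC3x := hasDerivAt_deriv_snd_slice hC3 t
  have hC1x' := continuous_deriv_snd_slice hC1 t
  have hC3x' := continuous_deriv_snd_slice hC3 t
  have hC0t : ∫ x in (0:ℝ)..L, deriv (fun s => C0 s x) t = ∫ x in (0:ℝ)..L, (0:ℝ) :=
    ((hC1per t).smul vth).intervalIntegral_eq_of_add_hasDerivAt
      (fun x => (hC1x x).const_mul vth) (hC1x'.const_mul vth) intervalIntegrable_const (heq0 t)
  have hC2t : ∫ x in (0:ℝ)..L, deriv (fun s => C2 s x) t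
      = ∫ x in (0:ℝ)..L, Real.sqrt 2 / vth * (E t x * C1 t x) :=
    ((((hC3per t).smul (Real.sqrt 3)).add ((hC1per t).smul (Real.sqrt 2))).smul vth
      ).intervalIntegral_eq_of_add_hasDerivAt
      (fun x => (((hC3x x).const_mul _).add ((hC1x x).const_mul _)).const_mul vth)
      (((hC3x'.const_mul _).add (hC1x'.const_mul _)).const_mul vth)
      (((continuous_snd_slice hE.continuous t).mul (continuous_snd_slice hC1.continuous t)
        ).const_mul _ |>.intervalIntegrable 0 L)
      (fun x => by linear_combination heq2 t x)
  have hD := hasDerivAt_intervalIntegral_const_mul_add hC2 hC0 (Real.sqrt 2) 0 L t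
  rw [hD.deriv, hC0t, hC2t, intervalIntegral.integral_zero, intervalIntegral.integral_const_mul]
  field_simp
  rw [Real.sq_sqrt zero_le_two]
  ring
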